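/- arXiv:1406.3802 — 2 statements merged into one kernel-verified Lean document; each statement's English description precedes it below -/
import Mathlib

section
/- Let 0 < α, β < 1 and let g_α, g_β be nonnegative measurable functions on (0,∞) with Laplace transforms exp(-p^α), exp(-p^β) respectively for p > 0. Define M_α(t,x) = t^{-1/α} g_α(x t^{-1/α}) and N_β(y,t) = (t/(β y^{1+1/β})) g_β(t y^{-1/β}). Then for every y > 0 and p > 0: ∫_0^∞ e^{-px} (∫_0^∞ M_α(t,x) N_β(y,t) dt) dx = p^{α(β-1)} exp(-y p^{αβ}). -/
/-!
Substituting `x = t^{1/α} u` shows that the Laplace transform of `M_α(t, ·)` is `e^{-t p^α}`.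
Everything being nonnegative, Tonelli lets us integrate in `x` first, and it remains to compute
`∫ e^{-s t} N_β(y, t) dt` with `s = p^α`. Substituting `t = y^{1/β} u` turns this into the first
moment `∫ u e^{-q u} g_β(u) du` with `q = s y^{1/β}`, which is
`-(d/dq) e^{-q^β} = β q^{β-1} e^{-q^β}` by differentiating the Laplace transform under the
integral sign.
-/

open MeasureTheory Real Set

noncomputable section

def kernelM (α : ℝ) (g : ℝ → ℝ) (t x : ℝ) : ℝ := t ^ (-(1 / α)) * g (x / t ^ (1 / α))

def kernelN (β : ℝ) (g : ℝ → ℝ) (y t : ℝ) : ℝ :=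
  t / (β * y ^ (1 + 1 / β)) * g (t / y ^ (1 / β))

def laplace (g : ℝ → ℝ) (p : ℝ) : ℝ := ∫ x in Ioi (0 : ℝ), exp (-p * x) * g x

end

section ChangeOfVariables

variable {E : Type*} [NormedAddCommGroup E]

theorem integral_Ioi_comp_div [NormedSpace ℝ E] (f : ℝ → E) {c : ℝ} (hc : 0 < c) :
    ∫ x in Ioi (0 : ℝ), f (x / c) = c • ∫ x in Ioi (0 : ℝ), f x := by
  simpa [div_eq_inv_mul] using integral_comp_mul_left_Ioi f 0 (inv_pos.mpr hc)

theorem integrableOn_Ioi_comp_div_iff (f : ℝ → E) {c : ℝ} (hc : 0 < c) :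
    IntegrableOn (fun x => f (x / c)) (Ioi 0) ↔ IntegrableOn f (Ioi 0) := by
  simpa [div_eq_inv_mul] using integrableOn_Ioi_comp_mul_left_iff f 0 (inv_pos.mpr hc)

end ChangeOfVariables

theorem integral_integral_swap_of_nonneg {X Y : Type*} [MeasurableSpace X] [MeasurableSpace Y]
    {μ : Measure X} {ν : Measure Y} [SFinite μ] [SFinite ν] {f : X → Y → ℝ}
    (hf : AEStronglyMeasurable (Function.uncurry f) (μ.prod ν))
    (hf0 : ∀ᵐ y ∂ν, 0 ≤ᵐ[μ] fun x => f x y)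
    (hfx : ∀ᵐ y ∂ν, Integrable (fun x => f x y) μ)
    (hfy : Integrable (fun y => ∫ x, f x y ∂μ) ν) :
    ∫ x, ∫ y, f x y ∂ν ∂μ = ∫ y, ∫ x, f x y ∂μ ∂ν := by
  refine integral_integral_swap ((integrable_prod_iff' hf).2 ⟨hfx, hfy.congr ?_⟩)
  filter_upwards [hf0] with y hy
  exact integral_congr_ae (hy.mono fun x hx => (norm_of_nonneg hx).symm)

section Laplace

variable {g : ℝ → ℝ}

theorem integrableOn_of_laplace_eq_exp {L : ℝ → ℝ}
    (hgL : ∀ p, 0 < p → laplace g p = exp (L p)) ⦃p : ℝ⦄ (hp : 0 < p) :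
    IntegrableOn (fun x => exp (-p * x) * g x) (Ioi 0) :=
  Integrable.of_integral_ne_zero (by rw [← laplace, hgL p hp]; exact exp_ne_zero _)

theorem mul_exp_neg_mul_le {q r x : ℝ} (hq : 0 < q) (hr : q / 2 ≤ r) (hx : 0 ≤ x) :
    x * exp (-r * x) ≤ 4 / q * exp (-(q / 4) * x) := by
  have hlin : x ≤ 4 / q * exp (q / 4 * x) := by
    calc x = 4 / q * (q / 4 * x) := by field_simp
      _ ≤ 4 / q * exp (q / 4 * x) := by gcongr; linarith [add_one_le_exp (q / 4 * x)]
  calc x * exp (-r * x) ≤ 4 / q * exp (q / 4 * x) * exp (-(q / 2) * x) := by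
        gcongr
    _ = 4 / q * exp (-(q / 4) * x) := by rw [mul_assoc, ← exp_add]; ring_nf

theorem norm_mul_exp_neg_mul_le {q r x : ℝ} (hq : 0 < q) (hr : q / 2 ≤ r) (hx : 0 ≤ x) :
    ‖x * (exp (-r * x) * g x)‖ ≤ 4 / q * ‖exp (-(q / 4) * x) * g x‖ := by
  simp only [norm_mul, norm_of_nonneg hx, norm_of_nonneg (exp_pos _).le, ← mul_assoc]
  exact mul_le_mul_of_nonneg_right (mul_exp_neg_mul_le hq hr hx) (norm_nonneg _)

variable (hg : ∀ p, 0 < p → IntegrableOn (fun x => exp (-p * x) * g x) (Ioi 0))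
include hg

theorem integrableOn_mul_exp_neg_mul {q : ℝ} (hq : 0 < q) :
    IntegrableOn (fun x => x * (exp (-q * x) * g x)) (Ioi 0) := by
  refine Integrable.mono' ((hg (q / 4) (by positivity)).norm.const_mul (4 / q))
    (continuous_id.aestronglyMeasurable.mul (hg q hq).aestronglyMeasurable) ?_
  filter_upwards [ae_restrict_mem measurableSet_Ioi] with x hx
  exact norm_mul_exp_neg_mul_le hq (by linarith) (le_of_lt hx)

theorem hasDerivAt_laplace {q : ℝ} (hq : 0 < q) :
    HasDerivAt (laplace g) (-∫ x in Ioi 0, x * (exp (-q * x) * g x)) q := by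
  have hball : ∀ r ∈ Metric.ball q (q / 2), q / 2 ≤ r := fun r hr => by
    have := (abs_lt.mp (mem_ball_iff_norm.mp hr)).1
    linarith
  have hderiv := hasDerivAt_integral_of_dominated_loc_of_deriv_le
    (F := fun r x => exp (-r * x) * g x) (F' := fun r x => -(x * (exp (-r * x) * g x)))
    (bound := fun x => 4 / q * ‖exp (-(q / 4) * x) * g x‖)
    (Metric.ball_mem_nhds q (half_pos hq))
    (Filter.eventually_of_mem (Ioi_mem_nhds hq) fun r hr => (hg r hr).aestronglyMeasurable)
    (hg q hq) (integrableOn_mul_exp_neg_mul hg hq).neg.aestronglyMeasurable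
    (by
      filter_upwards [ae_restrict_mem measurableSet_Ioi] with x hx r hr
      rw [norm_neg]
      exact norm_mul_exp_neg_mul_le hq (hball r hr) (le_of_lt hx))
    ((hg (q / 4) (by positivity)).norm.const_mul (4 / q))
    (Filter.Eventually.of_forall fun x r _ => by
      simpa [mul_comm, mul_left_comm, mul_assoc] using
        (((hasDerivAt_id r).neg.mul_const x).exp).mul_const (g x))
  rw [← integral_neg]
  exact hderiv.2

end Laplace

theorem integral_mul_exp_neg_mul_of_laplace_eq {β : ℝ} {g : ℝ → ℝ}
    (hgL : ∀ p, 0 < p → laplace g p = exp (-(p ^ β))) {q : ℝ} (hq : 0 < q) :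
    ∫ x in Ioi 0, x * (exp (-q * x) * g x) = β * q ^ (β - 1) * exp (-(q ^ β)) := by
  have hlap : laplace g =ᶠ[nhds q] fun p => exp (-(p ^ β)) :=
    Filter.eventually_of_mem (Ioi_mem_nhds hq) hgL
  have hexp : HasDerivAt (fun p => exp (-(p ^ β))) (exp (-(q ^ β)) * -(β * q ^ (β - 1))) q :=
    (hasDerivAt_rpow_const (Or.inl hq.ne')).neg.exp
  have := ((hasDerivAt_laplace (integrableOn_of_laplace_eq_exp hgL) hq).congr_of_eventuallyEq
    hlap.symm).unique hexp
  linarith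

section KernelM

variable {g : ℝ → ℝ} {t : ℝ}

theorem kernelM_nonneg (α : ℝ) (hg : ∀ x ∈ Ioi 0, 0 ≤ g x) (ht : 0 < t) {x : ℝ} (hx : 0 < x) :
    0 ≤ kernelM α g t x :=
  mul_nonneg (rpow_nonneg ht.le _) (hg _ (div_pos hx (rpow_pos_of_pos ht _)))

theorem exp_mul_kernelM (α : ℝ) (g : ℝ → ℝ) (ht : 0 < t) (p x : ℝ) :
    exp (-p * x) * kernelM α g t x = (t ^ (1 / α))⁻¹ *
      (exp (-(p * t ^ (1 / α)) * (x / t ^ (1 / α))) * g (x / t ^ (1 / α))) := by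
  have hc : t ^ (1 / α) ≠ 0 := (rpow_pos_of_pos ht _).ne'
  rw [kernelM, rpow_neg ht.le]
  field_simp

theorem integral_exp_mul_kernelM {α p : ℝ} (hα : α ≠ 0)
    (hgL : ∀ p, 0 < p → laplace g p = exp (-(p ^ α))) (hp : 0 < p) (ht : 0 < t) :
    ∫ x in Ioi 0, exp (-p * x) * kernelM α g t x = exp (-(p ^ α) * t) := by
  have hc : 0 < t ^ (1 / α) := rpow_pos_of_pos ht _
  simp_rw [exp_mul_kernelM α g ht, integral_const_mul,
    integral_Ioi_comp_div (fun u => exp (-(p * t ^ (1 / α)) * u) * g u) hc, smul_eq_mul,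
    inv_mul_cancel_left₀ hc.ne']
  rw [← laplace, hgL _ (mul_pos hp hc), mul_rpow hp.le hc.le, ← rpow_mul ht.le,
    one_div_mul_cancel hα, rpow_one, neg_mul]

theorem integrableOn_exp_mul_kernelM {α p : ℝ}
    (hgL : ∀ p, 0 < p → laplace g p = exp (-(p ^ α))) (hp : 0 < p) (ht : 0 < t) :
    IntegrableOn (fun x => exp (-p * x) * kernelM α g t x) (Ioi 0) := by
  have hc : 0 < t ^ (1 / α) := rpow_pos_of_pos ht _
  simp_rw [exp_mul_kernelM α g ht]
  exact ((integrableOn_Ioi_comp_div_iff _ hc).2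
    (integrableOn_of_laplace_eq_exp hgL (mul_pos hp hc))).const_mul _

end KernelM

section KernelN

variable {β : ℝ} {g : ℝ → ℝ} {y : ℝ}

theorem kernelN_nonneg (hβ : 0 < β) (hg : ∀ x ∈ Ioi 0, 0 ≤ g x) (hy : 0 < y) {t : ℝ}
    (ht : 0 < t) : 0 ≤ kernelN β g y t :=
  mul_nonneg (by positivity) (hg _ (div_pos ht (rpow_pos_of_pos hy _)))

theorem exp_mul_kernelN (hy : 0 < y) (s t : ℝ) :
    exp (-s * t) * kernelN β g y t = y ^ (1 / β) / (β * y ^ (1 + 1 / β)) *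
      (t / y ^ (1 / β) * (exp (-(s * y ^ (1 / β)) * (t / y ^ (1 / β))) * g (t / y ^ (1 / β)))) := by
  have hc : y ^ (1 / β) ≠ 0 := (rpow_pos_of_pos hy _).ne'
  rw [kernelN]
  field_simp

theorem integrableOn_exp_mul_kernelN (hgL : ∀ p, 0 < p → laplace g p = exp (-(p ^ β)))
    (hy : 0 < y) {s : ℝ} (hs : 0 < s) :
    IntegrableOn (fun t => exp (-s * t) * kernelN β g y t) (Ioi 0) := by
  have hc : 0 < y ^ (1 / β) := rpow_pos_of_pos hy _
  simp_rw [exp_mul_kernelN hy]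
  refine Integrable.const_mul ?_ _
  exact (integrableOn_Ioi_comp_div_iff (fun u => u * (exp (-(s * y ^ (1 / β)) * u) * g u)) hc).2
    (integrableOn_mul_exp_neg_mul (integrableOn_of_laplace_eq_exp hgL) (mul_pos hs hc))

theorem integral_exp_mul_kernelN (hβ : 0 < β)
    (hgL : ∀ p, 0 < p → laplace g p = exp (-(p ^ β))) (hy : 0 < y) {s : ℝ} (hs : 0 < s) :
    ∫ t in Ioi 0, exp (-s * t) * kernelN β g y t = s ^ (β - 1) * exp (-y * s ^ β) := by
  have hc : 0 < y ^ (1 / β) := rpow_pos_of_pos hy _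
  simp_rw [exp_mul_kernelN hy, integral_const_mul,
    integral_Ioi_comp_div (fun u => u * (exp (-(s * y ^ (1 / β)) * u) * g u)) hc, smul_eq_mul,
    integral_mul_exp_neg_mul_of_laplace_eq hgL (mul_pos hs hc),
    mul_rpow hs.le hc.le, ← rpow_mul hy.le, one_div_mul_cancel hβ.ne', rpow_one]
  have hY : y ^ (1 / β) * y ^ (1 / β) * y ^ (1 / β * (β - 1)) = y ^ (1 + 1 / β) := by
    rw [← rpow_add hy, ← rpow_add hy]
    congr 1
    field_simp
    ring
  rw [← hY]
  field_simp

end KernelN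

theorem laplace_mixed_kernel_general (α β : ℝ) (hα0 : 0 < α)
    (hβ0 : 0 < β)
    (gα gβ : ℝ → ℝ) (hgα : Measurable gα) (hgβ : Measurable gβ)
    (hgαpos : ∀ x ∈ Ioi (0 : ℝ), 0 ≤ gα x) (hgβpos : ∀ x ∈ Ioi (0 : ℝ), 0 ≤ gβ x)
    (hgαL : ∀ p : ℝ, 0 < p →
      (∫ x in Ioi (0 : ℝ), Real.exp (-p * x) * gα x) = Real.exp (-(p ^ α)))
    (hgβL : ∀ p : ℝ, 0 < p →
      (∫ x in Ioi (0 : ℝ), Real.exp (-p * x) * gβ x) = Real.exp (-(p ^ β))) :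
    ∀ y p : ℝ, 0 < y → 0 < p →
      (∫ x in Ioi (0 : ℝ), Real.exp (-p * x) *
        ∫ t in Ioi (0 : ℝ),
          (t ^ (-(1 / α)) * gα (x / t ^ (1 / α))) *
          (t / (β * y ^ (1 + 1 / β)) * gβ (t / y ^ (1 / β))))
        = p ^ (α * (β - 1)) * Real.exp (-y * p ^ (α * β)) := by
  intro y p hy hp
  have hpα : 0 < p ^ α := rpow_pos_of_pos hp α
  have hM : ∀ t ∈ Ioi (0 : ℝ), ∫ x in Ioi 0, exp (-p * x) * kernelM α gα t x * kernelN β gβ y t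
      = exp (-(p ^ α) * t) * kernelN β gβ y t := fun t ht => by
    rw [integral_mul_const, integral_exp_mul_kernelM hα0.ne' hgαL hp ht]
  change ∫ x in Ioi 0, exp (-p * x) * ∫ t in Ioi 0, kernelM α gα t x * kernelN β gβ y t = _
  calc ∫ x in Ioi 0, exp (-p * x) * ∫ t in Ioi 0, kernelM α gα t x * kernelN β gβ y t
      = ∫ x in Ioi 0, ∫ t in Ioi 0, exp (-p * x) * kernelM α gα t x * kernelN β gβ y t := by
        simp_rw [mul_assoc, integral_const_mul]
    _ = ∫ t in Ioi 0, ∫ x in Ioi 0, exp (-p * x) * kernelM α gα t x * kernelN β gβ y t := by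
        refine integral_integral_swap_of_nonneg ?_ ?_ ?_ ?_
        · refine Measurable.aestronglyMeasurable ?_
          unfold Function.uncurry kernelM kernelN
          fun_prop
        · filter_upwards [ae_restrict_mem measurableSet_Ioi] with t ht
          filter_upwards [ae_restrict_mem measurableSet_Ioi] with x hx
          exact mul_nonneg (mul_nonneg (exp_pos _).le (kernelM_nonneg α hgαpos ht hx))
            (kernelN_nonneg hβ0 hgβpos hy ht)
        · filter_upwards [ae_restrict_mem measurableSet_Ioi] with t ht
          exact (integrableOn_exp_mul_kernelM hgαL hp ht).mul_const _
        · exact (integrableOn_exp_mul_kernelN hgβL hy hpα).congr_fun (fun t ht => (hM t ht).symm)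
            measurableSet_Ioi
    _ = ∫ t in Ioi 0, exp (-(p ^ α) * t) * kernelN β gβ y t :=
        setIntegral_congr_fun measurableSet_Ioi hM
    _ = p ^ (α * (β - 1)) * exp (-y * p ^ (α * β)) := by
        rw [integral_exp_mul_kernelN hβ0 hgβL hy hpα, ← rpow_mul hp.le, ← rpow_mul hp.le]

theorem laplace_mixed_kernel (α β : ℝ) (hα0 : 0 < α) (hα1 : α < 1)
    (hβ0 : 0 < β) (hβ1 : β < 1)
    (gα gβ : ℝ → ℝ) (hgα : Measurable gα) (hgβ : Measurable gβ)
    (hgαpos : ∀ x ∈ Ioi (0 : ℝ), 0 ≤ gα x) (hgβpos : ∀ x ∈ Ioi (0 : ℝ), 0 ≤ gβ x)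
    (hgαL : ∀ p : ℝ, 0 < p →
      (∫ x in Ioi (0 : ℝ), Real.exp (-p * x) * gα x) = Real.exp (-(p ^ α)))
    (hgβL : ∀ p : ℝ, 0 < p →
      (∫ x in Ioi (0 : ℝ), Real.exp (-p * x) * gβ x) = Real.exp (-(p ^ β))) :
    ∀ y p : ℝ, 0 < y → 0 < p →
      (∫ x in Ioi (0 : ℝ), Real.exp (-p * x) *
        ∫ t in Ioi (0 : ℝ),
          (t ^ (-(1 / α)) * gα (x / t ^ (1 / α))) *
          (t / (β * y ^ (1 + 1 / β)) * gβ (t / y ^ (1 / β))))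
        = p ^ (α * (β - 1)) * Real.exp (-y * p ^ (α * β)) :=
  laplace_mixed_kernel_general α β hα0 hβ0 gα gβ hgα hgβ hgαpos hgβpos hgαL hgβL
end

section
/- For every p > 0 and every t > 0: ∫_0^∞ e^{-px} t^{-2} g_{1/2}(x/t²) dx = exp(-t √p), where g_{1/2}(u) = exp(-1/(4u))/(2√π u^{3/2}). -/
open MeasureTheory Real Set

noncomputable def levySmirnov (x : ℝ) : ℝ :=
  Real.exp (-1 / (4 * x)) / (2 * Real.sqrt π * x ^ ((3 : ℝ) / 2))

/-!
The substitution `x = t² y` reduces the claim to the Laplace transform of `g_{1/2}` at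
`a = p t²`, and `y = 1 / (4 s²)` turns that into `(2/√π) ∫₀^∞ exp (-s² - c²/s²) ds` with
`c = √a / 2`. Since `s² + c²/s² = (s - c/s)² + 2c`, it remains to see that
`∫₀^∞ exp (-(s - c/s)²) ds = √π / 2`. This is the Cauchy–Schlömilch substitution:
`u = s - c/s` maps `(0, ∞)` bijectively onto `ℝ` with Jacobian `1 + c/s²`, and the inversion
`s ↦ c/s`, which changes the sign of `u`, carries the part `1` of the Jacobian to the part `c/s²`.
-/

section CauchySchlomilch

variable {E : Type*} [NormedAddCommGroup E] [NormedSpace ℝ E]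

theorem integral_Ioi_div_sq_smul_comp_div (g : ℝ → E) {c : ℝ} (hc : 0 < c) :
    ∫ s in Ioi 0, (c / s ^ 2) • g (c / s) = ∫ s in Ioi 0, g s := by
  have h := integral_comp_rpow_Ioi (fun y => g (c * y)) (p := -1) (by norm_num)
  rw [integral_comp_mul_left_Ioi _ _ hc, mul_zero] at h
  rw [← smul_inv_smul₀ hc.ne' (∫ s in Ioi 0, g s), ← h, ← integral_smul]
  refine setIntegral_congr_fun measurableSet_Ioi fun s hs => ?_
  have hs : 0 < s := hs
  rw [smul_smul, rpow_neg_one, show (-1 : ℝ) - 1 = -2 by norm_num, rpow_neg hs.le]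
  norm_num [div_eq_mul_inv]

theorem hasDerivAt_sub_div (c : ℝ) {s : ℝ} (hs : s ≠ 0) :
    HasDerivAt (fun s => s - c / s) (1 + c / s ^ 2) s := by
  simpa [div_eq_mul_inv] using (hasDerivAt_id' s).fun_sub ((hasDerivAt_inv hs).const_mul c)

theorem strictMonoOn_sub_div {c : ℝ} (hc : 0 ≤ c) :
    StrictMonoOn (fun s => s - c / s) (Ioi 0) := by
  intro a ha b _ hab
  have : c / b ≤ c / a := div_le_div_of_nonneg_left hc ha hab.le
  show a - c / a < b - c / b
  linarith

theorem image_sub_div_Ioi {c : ℝ} (hc : 0 < c) : (fun s => s - c / s) '' Ioi 0 = univ := by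
  refine eq_univ_of_forall fun r => ⟨(r + √(r ^ 2 + 4 * c)) / 2, ?_, ?_⟩
  all_goals
    have hd := sq_sqrt (show 0 ≤ r ^ 2 + 4 * c by positivity)
    have hlt : |r| < √(r ^ 2 + 4 * c) := by
      rw [← sqrt_sq_eq_abs]; exact sqrt_lt_sqrt (sq_nonneg r) (by linarith)
    have hpos : 0 < r + √(r ^ 2 + 4 * c) := by linarith [neg_abs_le r]
  · exact half_pos hpos
  · field_simp
    nlinarith

theorem two_smul_integral_Ioi_comp_sub_div {f : ℝ → E} (hf : Integrable f)
    (hf_even : ∀ x, f (-x) = f x) {c : ℝ} (hc : 0 < c) :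
    (2 : ℝ) • ∫ s in Ioi 0, f (s - c / s) = ∫ x, f x := by
  set u : ℝ → ℝ := fun s => s - c / s
  have hu' : ∀ s ∈ Ioi (0 : ℝ), HasDerivWithinAt u (1 + c / s ^ 2) (Ioi 0) s :=
    fun s hs => (hasDerivAt_sub_div c (ne_of_gt hs)).hasDerivWithinAt
  have hu_inj : InjOn u (Ioi 0) := (strictMonoOn_sub_div hc.le).injOn
  have hu_inv : ∀ s ∈ Ioi (0 : ℝ), u (c / s) = -u s := fun s hs => by
    have : s ≠ 0 := ne_of_gt hs
    simp only [u]
    field_simp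
    ring
  have habs : EqOn (fun s => |1 + c / s ^ 2| • f (u s)) (fun s => (1 + c / s ^ 2) • f (u s))
      (Ioi 0) := fun s _ => by dsimp only; rw [abs_of_pos (by positivity)]
  have hchange : ∫ x, f x = ∫ s in Ioi 0, (1 + c / s ^ 2) • f (u s) := by
    rw [← setIntegral_univ, ← image_sub_div_Ioi hc,
      integral_image_eq_integral_abs_deriv_smul measurableSet_Ioi hu' hu_inj,
      setIntegral_congr_fun measurableSet_Ioi habs]
  have hint : IntegrableOn (fun s => (1 + c / s ^ 2) • f (u s)) (Ioi 0) := by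
    rw [← integrableOn_congr_fun habs measurableSet_Ioi,
      ← integrableOn_image_iff_integrableOn_abs_deriv_smul measurableSet_Ioi hu' hu_inj,
      image_sub_div_Ioi hc]
    exact hf.integrableOn
  have hint₁ : IntegrableOn (fun s => f (u s)) (Ioi 0) := by
    have hone : ∀ s : ℝ, 1 ≤ 1 + c / s ^ 2 := fun s => by
      have : 0 ≤ c / s ^ 2 := by positivity
      linarith
    refine (hint.bdd_smul 1 (φ := fun s => (1 + c / s ^ 2)⁻¹)
      (by fun_prop : Measurable fun s : ℝ => (1 + c / s ^ 2)⁻¹).aestronglyMeasurable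
      (ae_of_all _ fun s => ?_)).congr (ae_of_all _ fun s => ?_)
    · rw [norm_inv, Real.norm_of_nonneg (by linarith [hone s])]
      exact inv_le_one_of_one_le₀ (hone s)
    · exact inv_smul_smul₀ (by linarith [hone s]) _
  have hint₂ : IntegrableOn (fun s => (c / s ^ 2) • f (u s)) (Ioi 0) := by
    refine (hint.sub hint₁).congr (ae_of_all _ fun s => ?_)
    simp only [Pi.sub_apply, add_smul, one_smul, add_sub_cancel_left]
  have hsymm : ∫ s in Ioi 0, (c / s ^ 2) • f (u s) = ∫ s in Ioi 0, f (u s) := by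
    refine Eq.trans ?_ (integral_Ioi_div_sq_smul_comp_div (fun s => f (u s)) hc)
    refine setIntegral_congr_fun measurableSet_Ioi fun s hs => ?_
    simp only [hu_inv s hs, hf_even]
  calc (2 : ℝ) • ∫ s in Ioi 0, f (u s)
      = (∫ s in Ioi 0, f (u s)) + ∫ s in Ioi 0, (c / s ^ 2) • f (u s) := by
        rw [hsymm, two_smul]
    _ = ∫ x, f x := by
        rw [hchange, ← integral_add hint₁ hint₂]
        simp only [add_smul, one_smul]

end CauchySchlomilch

theorem integral_Ioi_exp_neg_sq_sub_sq_div_sq {c : ℝ} (hc : 0 < c) :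
    ∫ s in Ioi 0, exp (-s ^ 2 - c ^ 2 / s ^ 2) = √π / 2 * exp (-(2 * c)) := by
  have hsq : EqOn (fun s => exp (-s ^ 2 - c ^ 2 / s ^ 2))
      (fun s => exp (-(2 * c)) * exp (-(s - c / s) ^ 2)) (Ioi 0) := fun s hs => by
    have hs : s ≠ 0 := ne_of_gt hs
    dsimp only
    rw [← exp_add]
    congr 1
    field_simp
    ring
  have hgauss := two_smul_integral_Ioi_comp_sub_div (f := fun x => exp (-x ^ 2))
    (by simpa using integrable_exp_neg_mul_sq one_pos) (fun x => by simp) hc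
  rw [smul_eq_mul, show ∫ x, exp (-x ^ 2) = √π by simpa using integral_gaussian 1] at hgauss
  rw [setIntegral_congr_fun measurableSet_Ioi hsq, integral_const_mul, ← hgauss]
  ring

theorem levySmirnov_rpow_neg_two {x : ℝ} (hx : 0 < x) :
    levySmirnov (x ^ (-2 : ℝ)) = x ^ 3 * exp (-(x ^ 2 / 4)) / (2 * √π) := by
  have h32 : (x ^ (-2 : ℝ)) ^ ((3 : ℝ) / 2) = (x ^ 3)⁻¹ := by
    rw [← rpow_mul hx.le, show (-2 : ℝ) * (3 / 2) = -(3 : ℕ) by norm_num, rpow_neg hx.le,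
      rpow_natCast]
  have : x ≠ 0 := hx.ne'
  rw [levySmirnov, h32, rpow_neg hx.le, rpow_two]
  field_simp

theorem integral_exp_neg_mul_levySmirnov {a : ℝ} (ha : 0 < a) :
    ∫ y in Ioi 0, exp (-a * y) * levySmirnov y = exp (-√a) := by
  set G : ℝ → ℝ := fun y => exp (-a * y) * levySmirnov y
  set H : ℝ → ℝ := fun x => (|(-2 : ℝ)| * x ^ ((-2 : ℝ) - 1)) • G (x ^ (-2 : ℝ))
  have hH : EqOn (fun s => H (2 * s)) (fun s => (√π)⁻¹ * exp (-s ^ 2 - (√a / 2) ^ 2 / s ^ 2))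
      (Ioi 0) := fun s hs => by
    have hs : 0 < s := hs
    have : √π ≠ 0 := by positivity
    simp only [H, G, levySmirnov_rpow_neg_two (by positivity : 0 < 2 * s)]
    rw [show (-2 : ℝ) - 1 = -(3 : ℕ) by norm_num, rpow_neg (by positivity), rpow_natCast,
      rpow_neg (by positivity), rpow_two, div_pow, sq_sqrt ha.le, smul_eq_mul, abs_neg, abs_two,
      sub_eq_add_neg, exp_add]
    field_simp
    ring_nf
  calc ∫ y in Ioi 0, G y = ∫ x in Ioi 0, H x := (integral_comp_rpow_Ioi G (by norm_num)).symm
    _ = (2 : ℝ) • ∫ s in Ioi 0, H (2 * s) := by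
      rw [integral_comp_mul_left_Ioi' H 0 two_pos, mul_zero]
    _ = exp (-√a) := by
      rw [setIntegral_congr_fun measurableSet_Ioi hH, integral_const_mul,
        integral_Ioi_exp_neg_sq_sub_sq_div_sq (by positivity)]
      field_simp
      ring_nf

theorem laplace_rescaled_levySmirnov :
    ∀ p t : ℝ, 0 < p → 0 < t →
      (∫ x in Ioi (0 : ℝ), Real.exp (-p * x) * ((t ^ (2 : ℕ))⁻¹ * levySmirnov (x / t ^ (2 : ℕ))))
        = Real.exp (-t * Real.sqrt p) := by
  intro p t hp ht
  have ht2 : 0 < t ^ 2 := by positivity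
  set g : ℝ → ℝ := fun x => exp (-p * x) * ((t ^ 2)⁻¹ * levySmirnov (x / t ^ 2))
  calc ∫ x in Ioi 0, g x
      = t ^ 2 • ∫ y in Ioi 0, g (t ^ 2 * y) := by
        rw [integral_comp_mul_left_Ioi' g 0 ht2, mul_zero]
    _ = ∫ y in Ioi 0, exp (-(p * t ^ 2) * y) * levySmirnov y := by
        rw [← integral_smul]
        refine setIntegral_congr_fun measurableSet_Ioi fun y _ => ?_
        simp only [g, smul_eq_mul, mul_div_cancel_left₀ _ ht2.ne']
        field_simp
    _ = exp (-t * √p) := by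
      rw [integral_exp_neg_mul_levySmirnov (by positivity), sqrt_mul hp.le, sqrt_sq ht.le]
      ring_nf
end
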